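/- Let g be a real symmetric N×N matrix with zero diagonal, β > 0, h ∈ ℝ. Let Z = (Z₁,…,Z_N) be a centered Gaussian vector with Cov(Zᵢ,Zᵢ) = ∑ₖ |g_{ik}| and Cov(Zᵢ,Zⱼ) = g_{ij} for i ≠ j. Then log E_σ[exp((β/2)∑_{i,j} g_{ij}σᵢσⱼ + h∑ᵢσᵢ)] = log E_Z[exp(∑ᵢ log cosh(h + √β Zᵢ))] - (β/2)∑_{i,j}|g_{ij}|, where E_σ denotes expectation over σ uniform on {-1,1}^N. -/
import Mathlib

open MeasureTheory ProbabilityTheory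

/-- Exact closed formula for the finite-volume quenched SK free energy.
The centered Gaussian vector `Z` with covariance `C` (diagonal: row sums of `|g|`;
off-diagonal: `g`) is characterized through its moment generating function. -/
theorem sk_exact_free_energy (N : ℕ) (Ω : Type*) [MeasurableSpace Ω]
    (P : Measure Ω) [IsProbabilityMeasure P]
    (g : Fin N × Fin N → ℝ) (hsymm : ∀ i j, g (i, j) = g (j, i))
    (hdiag : ∀ i, g (i, i) = 0)
    (β h : ℝ) (hβ : 0 < β)
    (Z : Fin N → Ω → ℝ) (hZmeas : ∀ i, Measurable (Z i))
    (hZgauss : ∀ t : Fin N → ℝ,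
      ∫ ω, Real.exp (∑ i, t i * Z i ω) ∂P =
        Real.exp ((1 / 2) * ∑ i, ∑ j, t i *
          (if i = j then ∑ k, |g (i, k)| else g (i, j)) * t j)) :
    Real.log (((2 : ℝ) ^ N)⁻¹ *
        ∑ s : Fin N → Bool,
          Real.exp ((β / 2) * ∑ i, ∑ j,
              g (i, j) * (if s i then 1 else -1 : ℝ) * (if s j then 1 else -1 : ℝ) +
            h * ∑ i, (if s i then 1 else -1 : ℝ))) =
      Real.log (∫ ω, Real.exp
          (∑ i, Real.log (Real.cosh (h + Real.sqrt β * Z i ω))) ∂P) -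
        (β / 2) * ∑ i, ∑ j, |g (i, j)| := by
  classical
  set σ : (Fin N → Bool) → Fin N → ℝ := fun s i => if s i then (1:ℝ) else -1 with hσdef
  have hσsq : ∀ s i, σ s i * σ s i = 1 := by
    intro s i
    simp only [hσdef]
    split <;> norm_num
  set A : ℝ := ∑ i, ∑ j, |g (i, j)| with hA
  set Q : (Fin N → Bool) → ℝ := fun s => ∑ i, ∑ j, g (i, j) * σ s i * σ s j with hQ
  have hb : Real.sqrt β * Real.sqrt β = β := Real.mul_self_sqrt hβ.le
  -- Gaussian MGF for each spin configuration
  have hkey : ∀ s, ∫ ω, Real.exp (∑ i, (Real.sqrt β * σ s i) * Z i ω) ∂P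
      = Real.exp ((β / 2) * (A + Q s)) := by
    intro s
    rw [hZgauss (fun i => Real.sqrt β * σ s i)]
    congr 1
    have hrow : ∀ i, ∑ j, (Real.sqrt β * σ s i) *
        (if i = j then ∑ k, |g (i, k)| else g (i, j)) * (Real.sqrt β * σ s j)
        = β * (∑ k, |g (i, k)|) + β * ∑ j, g (i, j) * σ s i * σ s j := by
      intro i
      have hsplit : ∀ j, (Real.sqrt β * σ s i) *
          (if i = j then ∑ k, |g (i, k)| else g (i, j)) * (Real.sqrt β * σ s j)
          = β * (g (i, j) * σ s i * σ s j)
            + (if j = i then β * (∑ k, |g (i, k)|) else 0) := by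
        intro j
        by_cases hij : i = j
        · subst hij
          rw [if_pos rfl, if_pos rfl, hdiag i]
          calc (Real.sqrt β * σ s i) * (∑ k, |g (i, k)|) * (Real.sqrt β * σ s i)
              = (Real.sqrt β * Real.sqrt β) * (σ s i * σ s i) * (∑ k, |g (i, k)|) := by ring
            _ = β * (0 * σ s i * σ s i) + β * (∑ k, |g (i, k)|) := by
                rw [hb, hσsq s i]; ring
        · rw [if_neg hij, if_neg (fun hji => hij hji.symm)]
          calc (Real.sqrt β * σ s i) * g (i, j) * (Real.sqrt β * σ s j)
              = (Real.sqrt β * Real.sqrt β) * (g (i, j) * σ s i * σ s j) := by ring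
            _ = β * (g (i, j) * σ s i * σ s j) + 0 := by rw [hb]; ring
      rw [Finset.sum_congr rfl (fun j _ => hsplit j), Finset.sum_add_distrib,
        Finset.sum_ite_eq' Finset.univ i (fun _ => β * (∑ k, |g (i, k)|)),
        if_pos (Finset.mem_univ i), ← Finset.mul_sum]
      ring
    rw [Finset.sum_congr rfl (fun i _ => hrow i), Finset.sum_add_distrib,
      ← Finset.mul_sum, ← Finset.mul_sum, hA, hQ]
    ring
  -- integrability
  have hInt : ∀ s, Integrable (fun ω => Real.exp (∑ i, (Real.sqrt β * σ s i) * Z i ω)) P := by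
    intro s
    by_contra hni
    have h0 := hkey s
    rw [integral_undef hni] at h0
    exact Real.exp_ne_zero _ h0.symm
  -- product expansion of cosh
  have hcosh : ∀ x : Fin N → ℝ,
      Real.exp (∑ i, Real.log (Real.cosh (x i)))
        = ((2:ℝ) ^ N)⁻¹ * ∑ s : Fin N → Bool, Real.exp (∑ i, σ s i * x i) := by
    intro x
    rw [Real.exp_sum]
    have h1 : ∀ i ∈ Finset.univ, Real.exp (Real.log (Real.cosh (x i))) = Real.cosh (x i) :=
      fun i _ => Real.exp_log (Real.cosh_pos _)
    rw [Finset.prod_congr rfl h1]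
    have h2 : ∀ i ∈ Finset.univ, Real.cosh (x i)
        = (∑ b : Bool, Real.exp ((if b then (1:ℝ) else -1) * x i)) / 2 := by
      intro i _
      rw [Real.cosh_eq, Fintype.sum_bool]
      norm_num
    rw [Finset.prod_congr rfl h2, Finset.prod_div_distrib, Finset.prod_const,
      Finset.card_univ, Fintype.card_fin, Finset.prod_univ_sum]
    rw [Fintype.piFinset_univ]
    rw [div_eq_inv_mul]
    congr 1
    refine Finset.sum_congr rfl fun s _ => ?_
    rw [← Real.exp_sum]
  -- value of the Gaussian integral
  have hintval : (∫ ω, Real.exp (∑ i, Real.log (Real.cosh (h + Real.sqrt β * Z i ω))) ∂P)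
      = Real.exp ((β / 2) * A) *
        (((2:ℝ) ^ N)⁻¹ * ∑ s : Fin N → Bool, Real.exp ((β / 2) * Q s + h * ∑ i, σ s i)) := by
    have h1 : ∀ ω, Real.exp (∑ i, Real.log (Real.cosh (h + Real.sqrt β * Z i ω)))
        = ((2:ℝ) ^ N)⁻¹ * ∑ s : Fin N → Bool,
            Real.exp (h * ∑ i, σ s i) * Real.exp (∑ i, (Real.sqrt β * σ s i) * Z i ω) := by
      intro ω
      rw [hcosh (fun i => h + Real.sqrt β * Z i ω)]
      congr 1
      refine Finset.sum_congr rfl fun s _ => ?_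
      rw [← Real.exp_add]
      congr 1
      rw [Finset.mul_sum, ← Finset.sum_add_distrib]
      refine Finset.sum_congr rfl fun i _ => ?_
      ring
    simp_rw [h1]
    rw [integral_const_mul,
      integral_finset_sum _ (fun s _ => (hInt s).const_mul _)]
    have h2 : ∀ s ∈ (Finset.univ : Finset (Fin N → Bool)),
        (∫ ω, Real.exp (h * ∑ i, σ s i) *
            Real.exp (∑ i, (Real.sqrt β * σ s i) * Z i ω) ∂P)
        = Real.exp ((β / 2) * A) * Real.exp ((β / 2) * Q s + h * ∑ i, σ s i) := by
      intro s _
      rw [integral_const_mul, hkey s, ← Real.exp_add, ← Real.exp_add]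
      congr 1
      ring
    rw [Finset.sum_congr rfl h2, ← Finset.mul_sum]
    ring
  -- rewrite the goal using the abbreviations (definitional equality)
  have hgoal : (∑ s : Fin N → Bool,
      Real.exp ((β / 2) * ∑ i, ∑ j,
          g (i, j) * (if s i then 1 else -1 : ℝ) * (if s j then 1 else -1 : ℝ) +
        h * ∑ i, (if s i then 1 else -1 : ℝ)))
      = ∑ s : Fin N → Bool, Real.exp ((β / 2) * Q s + h * ∑ i, σ s i) := rfl
  rw [hgoal, hintval]
  have hS : 0 < ∑ s : Fin N → Bool, Real.exp ((β / 2) * Q s + h * ∑ i, σ s i) :=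
    Finset.sum_pos (fun s _ => Real.exp_pos _) Finset.univ_nonempty
  have hpow : (0:ℝ) < ((2:ℝ) ^ N)⁻¹ := by positivity
  rw [Real.log_mul hpow.ne' hS.ne',
    Real.log_mul (Real.exp_ne_zero _) (mul_pos hpow hS).ne',
    Real.log_mul hpow.ne' hS.ne', Real.log_exp]
  ring
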